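/- Under the source condition y = (A*A)^p w with ‖w‖ ≤ k, p ∈ (0,1), one has ‖a(A*A + aI)^{-1} y‖ ≤ c_p·k·a^p for every a > 0, where c_p = p^p(1-p)^(1-p). -/

import Mathlib

/-!
On the spectrum of the positive operator `T = A†A`, the functional calculus turns
`a • x = a (T + a)⁻¹ T^p w` into `f(T) w` with `f(s) = a s^p / (s + a)`, so
`‖a • x‖ ≤ sup_{s ≥ 0} f(s) · ‖w‖`.
Weighted AM-GM with weights `p, 1 - p` at the points `s / p, a / (1 - p)` gives
`s^p a^(1-p) ≤ p^p (1-p)^(1-p) (s + a)`, i.e. `f(s) ≤ p^p (1-p)^(1-p) a^p`.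
-/

open ContinuousLinearMap

theorem rpow_mul_rpow_one_sub_le {p s a : ℝ} (hp0 : 0 < p) (hp1 : p < 1)
    (hs : 0 ≤ s) (ha : 0 ≤ a) :
    s ^ p * a ^ (1 - p) ≤ p ^ p * (1 - p) ^ (1 - p) * (s + a) := by
  have hq : 0 < 1 - p := by linarith
  have amgm := Real.geom_mean_le_arith_mean2_weighted hp0.le hq.le
    (div_nonneg hs hp0.le) (div_nonneg ha hq.le) (by ring)
  rw [mul_div_cancel₀ s hp0.ne', mul_div_cancel₀ a hq.ne'] at amgm
  calc s ^ p * a ^ (1 - p)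
      = (p * (s / p)) ^ p * ((1 - p) * (a / (1 - p))) ^ (1 - p) := by
        rw [mul_div_cancel₀ s hp0.ne', mul_div_cancel₀ a hq.ne']
    _ = p ^ p * (1 - p) ^ (1 - p) * ((s / p) ^ p * (a / (1 - p)) ^ (1 - p)) := by
        rw [Real.mul_rpow hp0.le (div_nonneg hs hp0.le),
          Real.mul_rpow hq.le (div_nonneg ha hq.le)]
        ring
    _ ≤ p ^ p * (1 - p) ^ (1 - p) * (s + a) := by gcongr

theorem mul_rpow_div_add_le {p s a : ℝ} (hp0 : 0 < p) (hp1 : p < 1)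
    (hs : 0 ≤ s) (ha : 0 < a) :
    a * s ^ p / (s + a) ≤ p ^ p * (1 - p) ^ (1 - p) * a ^ p := by
  rw [div_le_iff₀ (by positivity)]
  calc a * s ^ p = s ^ p * a ^ (1 - p) * a ^ p := by
        rw [mul_assoc, ← Real.rpow_add ha, sub_add_cancel, Real.rpow_one, mul_comm]
    _ ≤ p ^ p * (1 - p) ^ (1 - p) * (s + a) * a ^ p := by
        gcongr ?_ * _
        exact rpow_mul_rpow_one_sub_le hp0 hp1 hs ha.le
    _ = p ^ p * (1 - p) ^ (1 - p) * a ^ p * (s + a) := by ring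

section CStarAlgebra

variable {𝓐 : Type*} [CStarAlgebra 𝓐] [PartialOrder 𝓐] [StarOrderedRing 𝓐]

theorem cfc_inv_add_const_mul_add_algebraMap {T : 𝓐} (hT : 0 ≤ T) {a : ℝ} (ha : 0 < a) :
    cfc (fun s : ℝ => (s + a)⁻¹) T * (T + algebraMap ℝ 𝓐 a) = 1 := by
  have hpos : ∀ s ∈ spectrum ℝ T, s + a ≠ 0 := fun s hs =>
    (add_pos_of_nonneg_of_pos (spectrum_nonneg_of_nonneg hT hs) ha).ne'
  have hshift : T + algebraMap ℝ 𝓐 a = cfc (fun s : ℝ => s + a) T := by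
    rw [cfc_add_const a (fun s : ℝ => s) T, cfc_id' ℝ T]
  rw [hshift, ← cfc_mul (fun s : ℝ => (s + a)⁻¹) _ T (ContinuousOn.inv₀ (by fun_prop) hpos),
    ← cfc_one ℝ T]
  exact cfc_congr fun s hs => inv_mul_cancel₀ (hpos s hs)

theorem smul_cfc_inv_add_const_mul_cfc_rpow {T : 𝓐} (hT : 0 ≤ T) {p a : ℝ} (hp : 0 ≤ p)
    (ha : 0 < a) :
    a • (cfc (fun s : ℝ => (s + a)⁻¹) T * cfc (fun s : ℝ => s ^ p) T) =
      cfc (fun s : ℝ => a * s ^ p / (s + a)) T := by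
  have hinv : ContinuousOn (fun s : ℝ => (s + a)⁻¹) (spectrum ℝ T) :=
    ContinuousOn.inv₀ (by fun_prop) fun s hs =>
      (add_pos_of_nonneg_of_pos (spectrum_nonneg_of_nonneg hT hs) ha).ne'
  have hpow : ContinuousOn (fun s : ℝ => s ^ p) (spectrum ℝ T) :=
    (Real.continuous_rpow_const hp).continuousOn
  rw [← cfc_mul _ _ T hinv hpow,
    ← cfc_smul a (fun s : ℝ => (s + a)⁻¹ * s ^ p) T (hinv.mul hpow)]
  exact cfc_congr fun s _ => by simp only [smul_eq_mul]; ring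

theorem norm_cfc_mul_rpow_div_add_le {T : 𝓐} (hT : 0 ≤ T) {p a : ℝ} (hp0 : 0 < p) (hp1 : p < 1)
    (ha : 0 < a) :
    ‖cfc (fun s : ℝ => a * s ^ p / (s + a)) T‖ ≤ p ^ p * (1 - p) ^ (1 - p) * a ^ p := by
  refine norm_cfc_le (by positivity) fun s hs => ?_
  have hs0 := spectrum_nonneg_of_nonneg hT hs
  rw [Real.norm_of_nonneg (by positivity)]
  exact mul_rpow_div_add_le hp0 hp1 hs0 ha

end CStarAlgebra

theorem source_condition_bound_general (H K : Type*)
    [NormedAddCommGroup H] [InnerProductSpace ℂ H] [CompleteSpace H]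
    [NormedAddCommGroup K] [InnerProductSpace ℂ K] [CompleteSpace K]
    (A : H →L[ℂ] K) (p k a : ℝ) (hp0 : 0 < p) (hp1 : p < 1) (ha : 0 < a)
    (w y : H) (hw : ‖w‖ ≤ k)
    (hy : y = cfc (fun s : ℝ => s ^ p) ((ContinuousLinearMap.adjoint A) ∘L A) w)
    (x : H)
    (hx : ((ContinuousLinearMap.adjoint A) ∘L A + a • (1 : H →L[ℂ] H)) x = y) :
    ‖a • x‖ ≤ p ^ p * (1 - p) ^ (1 - p) * k * a ^ p := by
  set T := adjoint A ∘L A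
  have hT : 0 ≤ T := (nonneg_iff_isPositive T).mpr (isPositive_adjoint_comp_self A)
  have hx' : x = cfc (fun s : ℝ => (s + a)⁻¹) T y := by
    rw [← hx, ← mul_apply_eq_comp, ← Algebra.algebraMap_eq_smul_one,
      cfc_inv_add_const_mul_add_algebraMap hT ha, one_apply_eq_self]
  have hax : a • x = cfc (fun s : ℝ => a * s ^ p / (s + a)) T w := by
    rw [hx', hy, ← smul_cfc_inv_add_const_mul_cfc_rpow hT hp0.le ha, smul_apply,
      mul_apply_eq_comp]
  calc ‖a • x‖ ≤ ‖cfc (fun s : ℝ => a * s ^ p / (s + a)) T‖ * ‖w‖ := by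
        rw [hax]; exact le_opNorm _ _
    _ ≤ (p ^ p * (1 - p) ^ (1 - p) * a ^ p) * k := by
        gcongr
        exact norm_cfc_mul_rpow_div_add_le hT hp0 hp1 ha
    _ = p ^ p * (1 - p) ^ (1 - p) * k * a ^ p := by ring

/-- Under the source condition `y = (A*A)^p w`, `‖w‖ ≤ k`, `p ∈ (0,1)`:
`‖a (A*A + aI)⁻¹ y‖ ≤ c_p k a^p`; i.e. if `(A*A + a•I) x = y` then
`‖a • x‖ ≤ p^p (1-p)^(1-p) k a^p`. -/
theorem source_condition_bound (H K : Type*)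
    [NormedAddCommGroup H] [InnerProductSpace ℂ H] [CompleteSpace H]
    [NormedAddCommGroup K] [InnerProductSpace ℂ K] [CompleteSpace K]
    (A : H →L[ℂ] K) (p k a : ℝ) (hp0 : 0 < p) (hp1 : p < 1) (hk : 0 < k) (ha : 0 < a)
    (w y : H) (hw : ‖w‖ ≤ k)
    (hy : y = cfc (fun s : ℝ => s ^ p) ((ContinuousLinearMap.adjoint A) ∘L A) w)
    (x : H)
    (hx : ((ContinuousLinearMap.adjoint A) ∘L A + a • (1 : H →L[ℂ] H)) x = y) :
    ‖a • x‖ ≤ p ^ p * (1 - p) ^ (1 - p) * k * a ^ p :=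
  source_condition_bound_general H K A p k a hp0 hp1 ha w y hw hy x hx
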